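/- Let A be a dg category. If objects A and C of A are isomorphic in the homotopy category H^0(A), then there exist morphisms r : A → C, r' : C → A, r̂ : A → A, ř : C → C, r̄ : A → C with degrees |r| = |r'| = 0, |r̂| = |ř| = −1, |r̄| = −2 and differentials dr = dr' = 0, dr̂ = 1_A − r'∘r, dř = 1_C − r∘r', dr̄ = r∘r̂ − ř∘r. -/

import Mathlib

/-!
Common infrastructure for formalizing statements about (semifree) dg categories,
following the paper "A cylinder functor and homotopy colimits for dg categories".

A dg category over a commutative ring `k` is modelled as a category whose hom-sets
are `k`-modules equipped with a homogeneity predicate `IsDeg n f` ("`f` is homogeneous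
of degree `n`"), a bilinear composition, identities, and a differential `d` satisfying
the Leibniz rule.  Semifreeness and semifree extensions are expressed through the
universal property of freely (as a graded category) adjoining generating morphisms,
together with the requirement that the differential of each generator lies in the
subcategory generated by the earlier generators ("indexed by an ordinal" is modelled
by a well-founded relation on the index type).
-/

universe u

open CategoryTheory

set_option autoImplicit false

/-- `msign n x` is `(-1) ^ n • x` (sign for an integer degree `n`). -/
def msign {M : Type*} [AddCommGroup M] (n : ℤ) (x : M) : M :=
  ((((-1 : ℤˣ) ^ n : ℤˣ) : ℤ)) • x

/-- A (small) dg category over `k`. -/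
structure DGCat (k : Type u) [CommRing k] : Type (u + 1) where
  Obj : Type u
  Hom : Obj → Obj → Type u
  [homAdd : ∀ A B, AddCommGroup (Hom A B)]
  [homMod : ∀ A B, Module k (Hom A B)]
  IsDeg : ∀ {A B : Obj}, ℤ → Hom A B → Prop
  one : ∀ A : Obj, Hom A A
  comp : ∀ {A B C : Obj}, Hom A B → Hom B C → Hom A C
  d : ∀ {A B : Obj}, Hom A B → Hom A B
  comp_assoc : ∀ {A B C D : Obj} (f : Hom A B) (g : Hom B C) (h : Hom C D),
    comp (comp f g) h = comp f (comp g h)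
  one_comp : ∀ {A B : Obj} (f : Hom A B), comp (one A) f = f
  comp_one : ∀ {A B : Obj} (f : Hom A B), comp f (one B) = f
  comp_add_left : ∀ {A B C : Obj} (f : Hom A B) (g g' : Hom B C),
    comp f (g + g') = comp f g + comp f g'
  comp_add_right : ∀ {A B C : Obj} (f f' : Hom A B) (g : Hom B C),
    comp (f + f') g = comp f g + comp f' g
  comp_smul_left : ∀ {A B C : Obj} (c : k) (f : Hom A B) (g : Hom B C),
    comp f (c • g) = c • comp f g
  comp_smul_right : ∀ {A B C : Obj} (c : k) (f : Hom A B) (g : Hom B C),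
    comp (c • f) g = c • comp f g
  isDeg_zero : ∀ {A B : Obj} (n : ℤ), IsDeg n (0 : Hom A B)
  isDeg_add : ∀ {A B : Obj} (n : ℤ) (f g : Hom A B), IsDeg n f → IsDeg n g → IsDeg n (f + g)
  isDeg_smul : ∀ {A B : Obj} (n : ℤ) (c : k) (f : Hom A B), IsDeg n f → IsDeg n (c • f)
  isDeg_unique : ∀ {A B : Obj} (m n : ℤ) (f : Hom A B), IsDeg m f → IsDeg n f → f = 0 ∨ m = n
  one_isDeg : ∀ A : Obj, IsDeg 0 (one A)
  comp_isDeg : ∀ {A B C : Obj} (m n : ℤ) (f : Hom A B) (g : Hom B C),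
    IsDeg m f → IsDeg n g → IsDeg (m + n) (comp f g)
  d_add : ∀ {A B : Obj} (f g : Hom A B), d (f + g) = d f + d g
  d_smul : ∀ {A B : Obj} (c : k) (f : Hom A B), d (c • f) = c • d f
  d_isDeg : ∀ {A B : Obj} (n : ℤ) (f : Hom A B), IsDeg n f → IsDeg (n + 1) (d f)
  d_d : ∀ {A B : Obj} (f : Hom A B), d (d f) = 0
  d_one : ∀ A : Obj, d (one A) = 0
  leibniz : ∀ {A B C : Obj} (m : ℤ) (f : Hom A B) (g : Hom B C), IsDeg m f →
    d (comp f g) = comp (d f) g + msign m (comp f (d g))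

attribute [instance] DGCat.homAdd DGCat.homMod

variable {k : Type u} [CommRing k]

/-- A graded (`k`-linear, not necessarily compatible with the differential) functor
between dg categories. -/
structure GrFunctor (k : Type u) [CommRing k] (C D : DGCat k) : Type u where
  obj : C.Obj → D.Obj
  map : ∀ {A B : C.Obj}, C.Hom A B → D.Hom (obj A) (obj B)
  map_add : ∀ {A B : C.Obj} (f g : C.Hom A B), map (f + g) = map f + map g
  map_smul : ∀ {A B : C.Obj} (c : k) (f : C.Hom A B), map (c • f) = c • map f
  map_one : ∀ A : C.Obj, map (C.one A) = D.one (obj A)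
  map_comp : ∀ {A B E : C.Obj} (f : C.Hom A B) (g : C.Hom B E),
    map (C.comp f g) = D.comp (map f) (map g)
  map_isDeg : ∀ {A B : C.Obj} (n : ℤ) (f : C.Hom A B), C.IsDeg n f → D.IsDeg n (map f)

/-- A dg functor between dg categories. -/
structure DGFunctor (k : Type u) [CommRing k] (C D : DGCat k) extends GrFunctor k C D where
  map_d : ∀ {A B : C.Obj} (f : C.Hom A B), map (C.d f) = D.d (map f)

theorem GrFunctor.map_zero {C D : DGCat k} (F : GrFunctor k C D) {A B : C.Obj} :
    F.map (0 : C.Hom A B) = 0 := by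
  have h : F.map (0 : C.Hom A B) = F.map 0 + F.map 0 := by
    simpa using F.map_add (0 : C.Hom A B) 0
  exact (left_eq_add.mp h)

/-- The identity dg functor. -/
@[reducible] def DGFunctor.id (k : Type u) [CommRing k] (C : DGCat k) : DGFunctor k C C where
  obj A := A
  map f := f
  map_add _ _ := rfl
  map_smul _ _ := rfl
  map_one _ := rfl
  map_comp _ _ := rfl
  map_isDeg _ _ h := h
  map_d _ := rfl

/-- Composition of dg functors (diagrammatic order: `F.comp G = G ∘ F`). -/
@[reducible] def DGFunctor.comp {C D E : DGCat k}
    (F : DGFunctor k C D) (G : DGFunctor k D E) : DGFunctor k C E where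
  obj A := G.obj (F.obj A)
  map f := G.map (F.map f)
  map_add f g := by rw [F.map_add, G.map_add]
  map_smul c f := by rw [F.map_smul, G.map_smul]
  map_one A := by rw [F.map_one, G.map_one]
  map_comp f g := by rw [F.map_comp, G.map_comp]
  map_isDeg n f h := G.map_isDeg n _ (F.map_isDeg n f h)
  map_d f := by rw [F.map_d, G.map_d]

/-- The category of (small) dg categories over `k`, with dg functors as morphisms. -/
instance : Category.{u} (DGCat k) where
  Hom C D := DGFunctor k C D
  id C := DGFunctor.id k C
  comp F G := DGFunctor.comp F G
  id_comp _ := rfl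
  comp_id _ := rfl
  assoc _ _ _ := rfl

/-- View a morphism of the category `DGCat k` as a dg functor (object part). -/
abbrev sfObjMap {C D : DGCat k} (F : C ⟶ D) : C.Obj → D.Obj :=
  (F : DGFunctor k C D).obj

/-- View a morphism of the category `DGCat k` as a dg functor (morphism part). -/
abbrev sfMap {C D : DGCat k} (F : C ⟶ D) {A B : C.Obj} :
    C.Hom A B → D.Hom (sfObjMap F A) (sfObjMap F B) :=
  fun f => (F : DGFunctor k C D).map f

/-- `F.InImage h`: `h` is in the image of the dg functor `F`. -/
def DGFunctor.InImage {C D : DGCat k} (F : DGFunctor k C D) {X Y : D.Obj}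
    (h : D.Hom X Y) : Prop :=
  ∃ (X₀ Y₀ : C.Obj) (g : C.Hom X₀ Y₀),
    ∃ _ : F.obj X₀ = X ∧ F.obj Y₀ = Y, HEq (F.map g) h

/-- The morphisms belonging to the subcategory of `D` generated (multiplicatively)
by a class `base` of morphisms, all identities, and the generators `gen i` with `P i`. -/
inductive GenBy {D : DGCat k} (base : ∀ {X Y : D.Obj}, D.Hom X Y → Prop)
    {ι : Type u} {src tgt : ι → D.Obj} (gen : ∀ i, D.Hom (src i) (tgt i)) (P : ι → Prop) :
    ∀ {X Y : D.Obj}, D.Hom X Y → Prop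
  | one (X : D.Obj) : GenBy base gen P (D.one X)
  | ofBase {X Y : D.Obj} (f : D.Hom X Y) : base f → GenBy base gen P f
  | ofGen (i : ι) : P i → GenBy base gen P (gen i)
  | comp {X Y Z : D.Obj} {f : D.Hom X Y} {g : D.Hom Y Z} :
      GenBy base gen P f → GenBy base gen P g → GenBy base gen P (D.comp f g)

/-- Generating data on a dg category: a family of morphisms indexed by a (well-ordered)
index type, with prescribed degrees. -/
structure SemifreeStruct (k : Type u) [CommRing k] (C : DGCat k) : Type (u + 1) where
  ι : Type u
  lt : ι → ι → Prop
  wf : WellFounded lt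
  src : ι → C.Obj
  tgt : ι → C.Obj
  degree : ι → ℤ
  gen : ∀ i, C.Hom (src i) (tgt i)
  gen_isDeg : ∀ i, C.IsDeg (degree i) (gen i)

/-- The generating morphisms freely generate `C` as a graded category:
any choice of objects and homogeneous values for the generators extends uniquely to a
graded functor. -/
def SemifreeStruct.IsFree {C : DGCat k} (S : SemifreeStruct k C) : Prop :=
  ∀ (E : DGCat k) (o : C.Obj → E.Obj)
    (φ : ∀ i, E.Hom (o (S.src i)) (o (S.tgt i))),
    (∀ i, E.IsDeg (S.degree i) (φ i)) →
    ∃! H : GrFunctor k C E, H.obj = o ∧ ∀ i, HEq (H.map (S.gen i)) (φ i)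

/-- The differential of each generator lies in the (linear span of the) subcategory
generated by the strictly earlier generators. -/
def SemifreeStruct.DLower {C : DGCat k} (S : SemifreeStruct k C) : Prop :=
  ∀ i, C.d (S.gen i) ∈ Submodule.span k
    {f : C.Hom (S.src i) (S.tgt i) |
      GenBy (fun {_ _} _ => False) S.gen (fun j => S.lt j i) f}

/-- `C` is a semifree dg category. -/
def DGCat.IsSemifree (C : DGCat k) : Prop :=
  ∃ S : SemifreeStruct k C, S.IsFree ∧ S.DLower

/-- `F : C ⟶ D` is a semifree extension (by some set of objects and some well-ordered
set of generating morphisms). -/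
def IsSemifreeInclusion {C D : DGCat k} (F : DGFunctor k C D) : Prop :=
  Function.Injective F.obj ∧
  (∀ {X Y : C.Obj}, Function.Injective fun f : C.Hom X Y => F.map f) ∧
  ∃ (ι : Type u) (lt : ι → ι → Prop) (_ : WellFounded lt)
    (src tgt : ι → D.Obj) (deg : ι → ℤ) (gen : ∀ i, D.Hom (src i) (tgt i)),
    (∀ i, D.IsDeg (deg i) (gen i)) ∧
    (∀ i, D.d (gen i) ∈ Submodule.span k
      {f : D.Hom (src i) (tgt i) | GenBy (fun {_ _} h => F.InImage h) gen (fun j => lt j i) f}) ∧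
    (∀ (E : DGCat k) (o : D.Obj → E.Obj) (G : GrFunctor k C E),
      (∀ A, o (F.obj A) = G.obj A) →
      ∀ (φ : ∀ i, E.Hom (o (src i)) (o (tgt i))), (∀ i, E.IsDeg (deg i) (φ i)) →
        ∃! H : GrFunctor k D E, H.obj = o ∧
          (∀ {X Y : C.Obj} (f : C.Hom X Y), HEq (H.map (F.map f)) (G.map f)) ∧
          (∀ i, HEq (H.map (gen i)) (φ i)))

/-- A pair of dg functors `jA, jB` exhibiting `H` as a semifree extension of the
coproduct `A ⊔ B`. -/
def IsSemifreeBiInclusion {A B H : DGCat k}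
    (jA : DGFunctor k A H) (jB : DGFunctor k B H) : Prop :=
  Function.Injective jA.obj ∧ Function.Injective jB.obj ∧
  (∀ X Y, jA.obj X ≠ jB.obj Y) ∧
  (∀ Z : H.Obj, (∃ X, jA.obj X = Z) ∨ (∃ Y, jB.obj Y = Z)) ∧
  (∀ {X Y : A.Obj}, Function.Injective fun f : A.Hom X Y => jA.map f) ∧
  (∀ {X Y : B.Obj}, Function.Injective fun f : B.Hom X Y => jB.map f) ∧
  ∃ (ι : Type u) (lt : ι → ι → Prop) (_ : WellFounded lt)
    (src tgt : ι → H.Obj) (deg : ι → ℤ) (gen : ∀ i, H.Hom (src i) (tgt i)),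
    (∀ i, H.IsDeg (deg i) (gen i)) ∧
    (∀ i, H.d (gen i) ∈ Submodule.span k
      {f : H.Hom (src i) (tgt i) |
        GenBy (fun {_ _} h => jA.InImage h ∨ jB.InImage h) gen (fun j => lt j i) f}) ∧
    (∀ (E : DGCat k) (o : H.Obj → E.Obj) (GA : GrFunctor k A E) (GB : GrFunctor k B E),
      (∀ X, o (jA.obj X) = GA.obj X) → (∀ Y, o (jB.obj Y) = GB.obj Y) →
      ∀ (φ : ∀ i, E.Hom (o (src i)) (o (tgt i))), (∀ i, E.IsDeg (deg i) (φ i)) →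
        ∃! G : GrFunctor k H E, G.obj = o ∧
          (∀ {X Y : A.Obj} (f : A.Hom X Y), HEq (G.map (jA.map f)) (GA.map f)) ∧
          (∀ {X Y : B.Obj} (f : B.Hom X Y), HEq (G.map (jB.map f)) (GB.map f)) ∧
          (∀ i, HEq (G.map (gen i)) (φ i)))

section Equivalences

variable {C D : DGCat k}

/-- `s` is a closed degree-zero morphism becoming an isomorphism in `H⁰`. -/
def DGCat.IsH0Iso (C : DGCat k) {X Y : C.Obj} (s : C.Hom X Y) : Prop :=
  C.IsDeg 0 s ∧ C.d s = 0 ∧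
  ∃ (s' : C.Hom Y X) (h : C.Hom X X) (h' : C.Hom Y Y),
    C.IsDeg 0 s' ∧ C.d s' = 0 ∧
    C.IsDeg (-1) h ∧ C.d h = C.one X - C.comp s s' ∧
    C.IsDeg (-1) h' ∧ C.d h' = C.one Y - C.comp s' s

/-- `X` and `Y` are isomorphic in `H⁰(C)`. -/
def DGCat.H0Iso (C : DGCat k) (X Y : C.Obj) : Prop := ∃ s : C.Hom X Y, C.IsH0Iso s

/-- `H^*(F)` is full. -/
def HFull (F : DGFunctor k C D) : Prop :=
  ∀ {A B : C.Obj} (n : ℤ) (g : D.Hom (F.obj A) (F.obj B)), D.IsDeg n g → D.d g = 0 →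
    ∃ (f : C.Hom A B) (h : D.Hom (F.obj A) (F.obj B)),
      C.IsDeg n f ∧ C.d f = 0 ∧ D.IsDeg (n - 1) h ∧ F.map f = g + D.d h

/-- `H^*(F)` is faithful. -/
def HFaithful (F : DGFunctor k C D) : Prop :=
  ∀ {A B : C.Obj} (n : ℤ) (f : C.Hom A B), C.IsDeg n f → C.d f = 0 →
    (∃ h : D.Hom (F.obj A) (F.obj B), D.IsDeg (n - 1) h ∧ F.map f = D.d h) →
    ∃ h' : C.Hom A B, C.IsDeg (n - 1) h' ∧ f = C.d h'

/-- `F` is a quasi-equivalence: quasi-isomorphisms on all hom complexes and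
essentially surjective on `H⁰`. -/
def QuasiEquiv (F : DGFunctor k C D) : Prop :=
  HFull F ∧ HFaithful F ∧ ∀ Y : D.Obj, ∃ A : C.Obj, D.H0Iso (F.obj A) Y

/-- `F` is a fibration in the Dwyer–Kan model structure: surjective on hom complexes
and `H⁰`-isomorphisms lift. -/
def DKFibration (F : DGFunctor k C D) : Prop :=
  (∀ {A B : C.Obj} (g : D.Hom (F.obj A) (F.obj B)), ∃ f : C.Hom A B, F.map f = g) ∧
  (∀ (A : C.Obj) (Y : D.Obj) (g : D.Hom (F.obj A) Y), D.IsH0Iso g →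
    ∃ (B : C.Obj) (_ : F.obj B = Y) (f : C.Hom A B), C.IsH0Iso f ∧ HEq (F.map f) g)

/-- Weak equivalences of dg categories: quasi-equivalences. -/
def QE (k : Type u) [CommRing k] : MorphismProperty (DGCat k) :=
  fun _ _ F => QuasiEquiv F

end Equivalences

section TDer

/-- A `(i₁, i₂)`-derivation of degree `-1`: the system of morphisms `θ ↦ t_θ`
of Definition 2.3 / Proposition 3.1, characterized by `k`-linearity, `t_{1_A} = 0`, and
the Leibniz-type formula on compositions. -/
structure TDer {C E : DGCat k} (i₁ i₂ : DGFunctor k C E) : Type u where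
  τ : ∀ {A B : C.Obj}, C.Hom A B → E.Hom (i₁.obj A) (i₂.obj B)
  τ_add : ∀ {A B : C.Obj} (f g : C.Hom A B), τ (f + g) = τ f + τ g
  τ_smul : ∀ {A B : C.Obj} (c : k) (f : C.Hom A B), τ (c • f) = c • τ f
  τ_one : ∀ A : C.Obj, τ (C.one A) = 0
  τ_isDeg : ∀ {A B : C.Obj} (n : ℤ) (f : C.Hom A B), C.IsDeg n f → E.IsDeg (n - 1) (τ f)
  τ_comp : ∀ {A B B' : C.Obj} (m : ℤ) (f : C.Hom A B) (g : C.Hom B B'), C.IsDeg m f →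
    τ (C.comp f g) = E.comp (τ f) (i₂.map g) + msign m (E.comp (i₁.map f) (τ g))

end TDer

section Hocolim

/-- The presentation of the homotopy colimit of a span `A ←α C →β B` of semifree
dg categories (Theorem 5.1(1)): a dg category `H` with inclusions `jA, jB` of `A` and `B`,
together with the generating morphisms `t_X, t'_X, t̂_X, ť_X, t̄_X` (for objects `X` of `C`)
and `t_f` (for generating morphisms `f` of `C`, packaged by the derivation `tau`),
with the prescribed degrees and differentials.  Taking `α = β = id` this is precisely
the presentation of the cylinder object `Cyl(C)` from Definition 4.3. -/
structure HocolimData {C A B : DGCat k} (S : SemifreeStruct k C)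
    (α : DGFunctor k C A) (β : DGFunctor k C B)
    (H : DGCat k) (jA : DGFunctor k A H) (jB : DGFunctor k B H) : Type u where
  t : ∀ X : C.Obj, H.Hom (jA.obj (α.obj X)) (jB.obj (β.obj X))
  t' : ∀ X : C.Obj, H.Hom (jB.obj (β.obj X)) (jA.obj (α.obj X))
  that : ∀ X : C.Obj, H.Hom (jA.obj (α.obj X)) (jA.obj (α.obj X))
  tcheck : ∀ X : C.Obj, H.Hom (jB.obj (β.obj X)) (jB.obj (β.obj X))
  tbar : ∀ X : C.Obj, H.Hom (jA.obj (α.obj X)) (jB.obj (β.obj X))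
  tau : TDer (α.comp jA) (β.comp jB)
  t_isDeg : ∀ X, H.IsDeg 0 (t X)
  t'_isDeg : ∀ X, H.IsDeg 0 (t' X)
  that_isDeg : ∀ X, H.IsDeg (-1) (that X)
  tcheck_isDeg : ∀ X, H.IsDeg (-1) (tcheck X)
  tbar_isDeg : ∀ X, H.IsDeg (-2) (tbar X)
  d_t : ∀ X, H.d (t X) = 0
  d_t' : ∀ X, H.d (t' X) = 0
  d_that : ∀ X, H.d (that X) = H.one (jA.obj (α.obj X)) - H.comp (t X) (t' X)
  d_tcheck : ∀ X, H.d (tcheck X) = H.one (jB.obj (β.obj X)) - H.comp (t' X) (t X)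
  d_tbar : ∀ X, H.d (tbar X) = H.comp (that X) (t X) - H.comp (t X) (tcheck X)
  tau_gen_isDeg : ∀ i, H.IsDeg (S.degree i - 1) (tau.τ (S.gen i))
  d_tau_gen : ∀ i, H.d (tau.τ (S.gen i)) =
    msign (S.degree i)
      (H.comp (t (S.src i)) (jB.map (β.map (S.gen i)))
        - H.comp (jA.map (α.map (S.gen i))) (t (S.tgt i)))
      + tau.τ (C.d (S.gen i))

/-- `H` is freely generated over `A ⊔ B` by the above generators. -/
def HocolimData.Free {C A B : DGCat k} {S : SemifreeStruct k C}
    {α : DGFunctor k C A} {β : DGFunctor k C B} {H : DGCat k}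
    {jA : DGFunctor k A H} {jB : DGFunctor k B H}
    (D : HocolimData S α β H jA jB) : Prop :=
  Function.Injective jA.obj ∧ Function.Injective jB.obj ∧
  (∀ X Y, jA.obj X ≠ jB.obj Y) ∧
  (∀ Z : H.Obj, (∃ X, jA.obj X = Z) ∨ (∃ Y, jB.obj Y = Z)) ∧
  (∀ {X Y : A.Obj}, Function.Injective fun f : A.Hom X Y => jA.map f) ∧
  (∀ {X Y : B.Obj}, Function.Injective fun f : B.Hom X Y => jB.map f) ∧
  ∀ (E : DGCat k) (o : H.Obj → E.Obj) (GA : GrFunctor k A E) (GB : GrFunctor k B E),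
    (∀ X, o (jA.obj X) = GA.obj X) → (∀ Y, o (jB.obj Y) = GB.obj Y) →
    ∀ (φt φbar : ∀ X : C.Obj, E.Hom (GA.obj (α.obj X)) (GB.obj (β.obj X)))
      (φt' : ∀ X : C.Obj, E.Hom (GB.obj (β.obj X)) (GA.obj (α.obj X)))
      (φhat : ∀ X : C.Obj, E.Hom (GA.obj (α.obj X)) (GA.obj (α.obj X)))
      (φcheck : ∀ X : C.Obj, E.Hom (GB.obj (β.obj X)) (GB.obj (β.obj X)))
      (φgen : ∀ i, E.Hom (GA.obj (α.obj (S.src i))) (GB.obj (β.obj (S.tgt i)))),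
      (∀ X, E.IsDeg 0 (φt X)) → (∀ X, E.IsDeg 0 (φt' X)) →
      (∀ X, E.IsDeg (-1) (φhat X)) → (∀ X, E.IsDeg (-1) (φcheck X)) →
      (∀ X, E.IsDeg (-2) (φbar X)) → (∀ i, E.IsDeg (S.degree i - 1) (φgen i)) →
      ∃! G : GrFunctor k H E, G.obj = o ∧
        (∀ {X Y : A.Obj} (f : A.Hom X Y), HEq (G.map (jA.map f)) (GA.map f)) ∧
        (∀ {X Y : B.Obj} (f : B.Hom X Y), HEq (G.map (jB.map f)) (GB.map f)) ∧
        (∀ X, HEq (G.map (D.t X)) (φt X)) ∧ (∀ X, HEq (G.map (D.t' X)) (φt' X)) ∧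
        (∀ X, HEq (G.map (D.that X)) (φhat X)) ∧ (∀ X, HEq (G.map (D.tcheck X)) (φcheck X)) ∧
        (∀ X, HEq (G.map (D.tbar X)) (φbar X)) ∧
        (∀ i, HEq (G.map (D.tau.τ (S.gen i))) (φgen i))

/-- The presentation of the cylinder object `Cyl(C)` of a semifree dg category
(Definition 4.3): the special case `α = β = id` of `HocolimData`. -/
abbrev CylData {C : DGCat k} (S : SemifreeStruct k C)
    (E : DGCat k) (i₁ i₂ : DGFunctor k C E) : Type u :=
  HocolimData S (DGFunctor.id k C) (DGFunctor.id k C) E i₁ i₂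

/-- The projection `p : Cyl(C) → C` of Theorem 4.5, specified by its values. -/
def IsCylProjection {C E : DGCat k} {S : SemifreeStruct k C} {i₁ i₂ : DGFunctor k C E}
    (CD : CylData S E i₁ i₂) (p : DGFunctor k E C) : Prop :=
  DGFunctor.comp i₁ p = DGFunctor.id k C ∧
  DGFunctor.comp i₂ p = DGFunctor.id k C ∧
  (∀ X : C.Obj, HEq (p.map (CD.t X)) (C.one X)) ∧
  (∀ X : C.Obj, HEq (p.map (CD.t' X)) (C.one X)) ∧
  (∀ X : C.Obj, HEq (p.map (CD.that X)) (0 : C.Hom X X)) ∧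
  (∀ X : C.Obj, HEq (p.map (CD.tcheck X)) (0 : C.Hom X X)) ∧
  (∀ X : C.Obj, HEq (p.map (CD.tbar X)) (0 : C.Hom X X)) ∧
  (∀ i, HEq (p.map (CD.tau.τ (S.gen i))) (0 : C.Hom (S.src i) (S.tgt i)))

end Hocolim

section Homotopy

/-- Two dg functors out of a semifree dg category are homotopic (via the cylinder). -/
def Homotopic {C B : DGCat k} (S : SemifreeStruct k C) (F₁ F₂ : DGFunctor k C B) : Prop :=
  ∃ (E : DGCat k) (i₁ i₂ : DGFunctor k C E) (CD : CylData S E i₁ i₂), CD.Free ∧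
    ∃ H : DGFunctor k E B, DGFunctor.comp i₁ H = F₁ ∧ DGFunctor.comp i₂ H = F₂

end Homotopy

section Localization

/-- A set of closed degree-zero morphisms of `C` (given as an indexed family). -/
structure LocIndex (C : DGCat k) : Type (u + 1) where
  σ : Type u
  a : σ → C.Obj
  b : σ → C.Obj
  g : ∀ s, C.Hom (a s) (b s)
  g_isDeg : ∀ s, C.IsDeg 0 (g s)
  g_closed : ∀ s, C.d (g s) = 0

/-- The presentation of the dg localization `C[S⁻¹]` (Proposition 2.7):
the semifree extension of `C` by `g', ĝ, ǧ, ḡ` for each `g ∈ S`. -/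
structure LocData {C : DGCat k} (W : LocIndex C) : Type (u + 1) where
  loc : DGCat k
  j : DGFunctor k C loc
  ginv : ∀ s, loc.Hom (j.obj (W.b s)) (j.obj (W.a s))
  ghat : ∀ s, loc.Hom (j.obj (W.a s)) (j.obj (W.a s))
  gcheck : ∀ s, loc.Hom (j.obj (W.b s)) (j.obj (W.b s))
  gbar : ∀ s, loc.Hom (j.obj (W.a s)) (j.obj (W.b s))
  ginv_isDeg : ∀ s, loc.IsDeg 0 (ginv s)
  ghat_isDeg : ∀ s, loc.IsDeg (-1) (ghat s)
  gcheck_isDeg : ∀ s, loc.IsDeg (-1) (gcheck s)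
  gbar_isDeg : ∀ s, loc.IsDeg (-2) (gbar s)
  d_ginv : ∀ s, loc.d (ginv s) = 0
  d_ghat : ∀ s, loc.d (ghat s) =
    loc.one (j.obj (W.a s)) - loc.comp (j.map (W.g s)) (ginv s)
  d_gcheck : ∀ s, loc.d (gcheck s) =
    loc.one (j.obj (W.b s)) - loc.comp (ginv s) (j.map (W.g s))
  d_gbar : ∀ s, loc.d (gbar s) =
    loc.comp (ghat s) (j.map (W.g s)) - loc.comp (j.map (W.g s)) (gcheck s)

/-- `loc` is freely generated over `C` by the localization generators. -/
def LocData.Free {C : DGCat k} {W : LocIndex C} (L : LocData W) : Prop :=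
  Function.Bijective L.j.obj ∧
  (∀ {X Y : C.Obj}, Function.Injective fun f : C.Hom X Y => L.j.map f) ∧
  ∀ (E : DGCat k) (o : L.loc.Obj → E.Obj) (G : GrFunctor k C E),
    (∀ X, o (L.j.obj X) = G.obj X) →
    ∀ (φinv : ∀ s, E.Hom (G.obj (W.b s)) (G.obj (W.a s)))
      (φhat : ∀ s, E.Hom (G.obj (W.a s)) (G.obj (W.a s)))
      (φcheck : ∀ s, E.Hom (G.obj (W.b s)) (G.obj (W.b s)))
      (φbar : ∀ s, E.Hom (G.obj (W.a s)) (G.obj (W.b s))),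
      (∀ s, E.IsDeg 0 (φinv s)) → (∀ s, E.IsDeg (-1) (φhat s)) →
      (∀ s, E.IsDeg (-1) (φcheck s)) → (∀ s, E.IsDeg (-2) (φbar s)) →
      ∃! H : GrFunctor k L.loc E, H.obj = o ∧
        (∀ {X Y : C.Obj} (f : C.Hom X Y), HEq (H.map (L.j.map f)) (G.map f)) ∧
        (∀ s, HEq (H.map (L.ginv s)) (φinv s)) ∧ (∀ s, HEq (H.map (L.ghat s)) (φhat s)) ∧
        (∀ s, HEq (H.map (L.gcheck s)) (φcheck s)) ∧ (∀ s, HEq (H.map (L.gbar s)) (φbar s))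

/-- The family `i₁(S) ⊔ i₂(S)` of closed degree-zero morphisms of `E`. -/
def LocIndex.double {C E : DGCat k} (W : LocIndex C) (i₁ i₂ : DGFunctor k C E) :
    LocIndex E where
  σ := W.σ ⊕ W.σ
  a := Sum.elim (fun s => i₁.obj (W.a s)) (fun s => i₂.obj (W.a s))
  b := Sum.elim (fun s => i₁.obj (W.b s)) (fun s => i₂.obj (W.b s))
  g s := match s with
    | .inl s => i₁.map (W.g s)
    | .inr s => i₂.map (W.g s)
  g_isDeg s := match s with
    | .inl s => i₁.map_isDeg 0 _ (W.g_isDeg s)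
    | .inr s => i₂.map_isDeg 0 _ (W.g_isDeg s)
  g_closed s := match s with
    | .inl s => by show E.d (i₁.map (W.g s)) = 0; rw [← i₁.map_d, W.g_closed]; exact i₁.toGrFunctor.map_zero
    | .inr s => by show E.d (i₂.map (W.g s)) = 0; rw [← i₂.map_d, W.g_closed]; exact i₂.toGrFunctor.map_zero

end Localization

section LocCyl

/-- The setup of Theorem 4.9: a semifree dg category `C` with a set `Wl` of closed
degree-zero morphisms, the localization `L = C[S⁻¹]`, the cylinder `E = Cyl(C)`,
the localization `M = Cyl(C)[(i₁(S) ⊔ i₂(S))⁻¹]`, and the two induced structural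
functors `I₁, I₂ : C[S⁻¹] → Cyl(C)[(i₁(S) ⊔ i₂(S))⁻¹]`. -/
structure LocCylSetup (C : DGCat k) (S : SemifreeStruct k C) (Wl : LocIndex C) where
  L : LocData Wl
  E : DGCat k
  i₁ : DGFunctor k C E
  i₂ : DGFunctor k C E
  CD : CylData S E i₁ i₂
  M : LocData (Wl.double i₁ i₂)
  I₁ : DGFunctor k L.loc M.loc
  I₂ : DGFunctor k L.loc M.loc
  hI₁ : DGFunctor.comp L.j I₁ = DGFunctor.comp i₁ M.j
  hI₂ : DGFunctor.comp L.j I₂ = DGFunctor.comp i₂ M.j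
  hI₁inv : ∀ s, HEq (I₁.map (L.ginv s)) (M.ginv (Sum.inl s))
  hI₁hat : ∀ s, HEq (I₁.map (L.ghat s)) (M.ghat (Sum.inl s))
  hI₁check : ∀ s, HEq (I₁.map (L.gcheck s)) (M.gcheck (Sum.inl s))
  hI₁bar : ∀ s, HEq (I₁.map (L.gbar s)) (M.gbar (Sum.inl s))
  hI₂inv : ∀ s, HEq (I₂.map (L.ginv s)) (M.ginv (Sum.inr s))
  hI₂hat : ∀ s, HEq (I₂.map (L.ghat s)) (M.ghat (Sum.inr s))
  hI₂check : ∀ s, HEq (I₂.map (L.gcheck s)) (M.gcheck (Sum.inr s))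
  hI₂bar : ∀ s, HEq (I₂.map (L.gbar s)) (M.gbar (Sum.inr s))

/-- All freeness hypotheses for a `LocCylSetup`. -/
def LocCylSetup.Free {C : DGCat k} {S : SemifreeStruct k C} {Wl : LocIndex C}
    (Z : LocCylSetup C S Wl) : Prop :=
  Z.L.Free ∧ Z.CD.Free ∧ Z.M.Free

/-- The projection `p : Cyl(C)[(i₁(S) ⊔ i₂(S))⁻¹] → C[S⁻¹]` of Theorem 4.9,
specified by its values. -/
def IsLocCylProjection {C : DGCat k} {S : SemifreeStruct k C} {Wl : LocIndex C}
    (Z : LocCylSetup C S Wl) (p : DGFunctor k Z.M.loc Z.L.loc) : Prop :=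
  DGFunctor.comp Z.I₁ p = DGFunctor.id k Z.L.loc ∧
  DGFunctor.comp Z.I₂ p = DGFunctor.id k Z.L.loc ∧
  (∀ X : C.Obj, HEq (p.map (Z.M.j.map (Z.CD.t X))) (Z.L.loc.one (Z.L.j.obj X))) ∧
  (∀ X : C.Obj, HEq (p.map (Z.M.j.map (Z.CD.t' X))) (Z.L.loc.one (Z.L.j.obj X))) ∧
  (∀ X : C.Obj, HEq (p.map (Z.M.j.map (Z.CD.that X)))
    (0 : Z.L.loc.Hom (Z.L.j.obj X) (Z.L.j.obj X))) ∧
  (∀ X : C.Obj, HEq (p.map (Z.M.j.map (Z.CD.tcheck X)))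
    (0 : Z.L.loc.Hom (Z.L.j.obj X) (Z.L.j.obj X))) ∧
  (∀ X : C.Obj, HEq (p.map (Z.M.j.map (Z.CD.tbar X)))
    (0 : Z.L.loc.Hom (Z.L.j.obj X) (Z.L.j.obj X))) ∧
  (∀ i, HEq (p.map (Z.M.j.map (Z.CD.tau.τ (S.gen i))))
    (0 : Z.L.loc.Hom (Z.L.j.obj (S.src i)) (Z.L.j.obj (S.tgt i))))

/-- The formulas (4.2) of Theorem 4.10 expressing `t_{g'}, t_{ĝ}, t_{ǧ}, t_{ḡ}` for a
localization generator `g ∈ S` in terms of `t_g` and the object generators: a property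
of a derivation `T` on `C[S⁻¹]` (with values in `E`, along `I₁, I₂`) with respect to the
family `tO` of object generators `t_X`. -/
def LocTDerSpec {C : DGCat k} {Wl : LocIndex C} (L : LocData Wl) {E : DGCat k}
    (I₁ I₂ : DGFunctor k L.loc E)
    (tO : ∀ X : C.Obj, E.Hom (I₁.obj (L.j.obj X)) (I₂.obj (L.j.obj X)))
    (T : TDer I₁ I₂) : Prop :=
  ∀ s : Wl.σ,
    (T.τ (L.ginv s) =
      -(E.comp (E.comp (I₁.map (L.ginv s)) (T.τ (L.j.map (Wl.g s)))) (I₂.map (L.ginv s)))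
      - E.comp (E.comp (I₁.map (L.ginv s)) (tO (Wl.a s))) (I₂.map (L.ghat s))
      + E.comp (E.comp (I₁.map (L.gcheck s)) (tO (Wl.b s))) (I₂.map (L.ginv s))
      + E.comp (tO (Wl.b s))
          (I₂.map (L.loc.comp (L.ginv s) (L.ghat s) - L.loc.comp (L.gcheck s) (L.ginv s)))) ∧
    (T.τ (L.ghat s) =
      E.comp (E.comp (I₁.map (L.ghat s)) (T.τ (L.j.map (Wl.g s)))) (I₂.map (L.ginv s))
      + E.comp (E.comp (I₁.map (L.ghat s)) (tO (Wl.a s))) (I₂.map (L.ghat s))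
      + E.comp (E.comp (I₁.map (L.gbar s)) (tO (Wl.b s))) (I₂.map (L.ginv s))
      - E.comp (tO (Wl.a s))
          (I₂.map (L.loc.comp (L.ghat s) (L.ghat s) + L.loc.comp (L.gbar s) (L.ginv s)))
      - E.comp (T.τ (L.j.map (Wl.g s)))
          (I₂.map (L.loc.comp (L.ginv s) (L.ghat s) - L.loc.comp (L.gcheck s) (L.ginv s)))) ∧
    (T.τ (L.gcheck s) =
      -(E.comp (E.comp (I₁.map (L.ginv s)) (T.τ (L.j.map (Wl.g s)))) (I₂.map (L.gcheck s)))
      + E.comp (E.comp (I₁.map (L.gcheck s)) (tO (Wl.b s))) (I₂.map (L.gcheck s))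
      + E.comp (E.comp (I₁.map (L.ginv s)) (tO (Wl.a s))) (I₂.map (L.gbar s))
      - E.comp (tO (Wl.b s))
          (I₂.map (L.loc.comp (L.gcheck s) (L.gcheck s) + L.loc.comp (L.ginv s) (L.gbar s)))) ∧
    (T.τ (L.gbar s) =
      -(E.comp (E.comp (I₁.map (L.ghat s)) (T.τ (L.j.map (Wl.g s)))) (I₂.map (L.gcheck s)))
      - E.comp (E.comp (I₁.map (L.gbar s)) (tO (Wl.b s))) (I₂.map (L.gcheck s))
      + E.comp (E.comp (I₁.map (L.ghat s)) (tO (Wl.a s))) (I₂.map (L.gbar s))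
      + E.comp (tO (Wl.a s))
          (I₂.map (L.loc.comp (L.gbar s) (L.gcheck s) - L.loc.comp (L.ghat s) (L.gbar s)))
      - E.comp (T.τ (L.j.map (Wl.g s)))
          (I₂.map (L.loc.comp (L.gcheck s) (L.gcheck s) + L.loc.comp (L.ginv s) (L.gbar s))))

end LocCyl

section Bundled

/-- The category `dgCat_s` of semifree dg categories (objects carry a chosen semifree
structure; morphisms are all dg functors). -/
structure SfObj (k : Type u) [CommRing k] : Type (u + 1) where
  cat : DGCat k
  str : SemifreeStruct k cat
  str_free : str.IsFree
  str_dLower : str.DLower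

instance : Category.{u} (SfObj k) where
  Hom X Y := DGFunctor k X.cat Y.cat
  id X := DGFunctor.id k X.cat
  comp F G := DGFunctor.comp F G
  id_comp _ := rfl
  comp_id _ := rfl
  assoc _ _ _ := rfl

/-- View a morphism of `SfObj k` as a dg functor. -/
abbrev sfHom {X Y : SfObj k} (F : X ⟶ Y) : DGFunctor k X.cat Y.cat := F

/-- Cofibrations of semifree dg categories: the semifree extensions. -/
def cofSf (k : Type u) [CommRing k] : MorphismProperty (SfObj k) :=
  fun _ _ F => IsSemifreeInclusion F

/-- Quasi-equivalences, as a morphism property of `SfObj k`. -/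
def weSf (k : Type u) [CommRing k] : MorphismProperty (SfObj k) :=
  fun _ _ F => QuasiEquiv F

end Bundled

section Coprod

/-- Data exhibiting `P` as a coproduct `A ⊔ B` of dg categories. -/
structure CoprodData (A B P : DGCat k) : Type u where
  inl : DGFunctor k A P
  inr : DGFunctor k B P

/-- `P` satisfies the universal property of the coproduct `A ⊔ B` in `dgCat`. -/
def CoprodData.IsCoprod {A B P : DGCat k} (cp : CoprodData A B P) : Prop :=
  ∀ (E : DGCat k) (G₁ : DGFunctor k A E) (G₂ : DGFunctor k B E),
    ∃! H : DGFunctor k P E, DGFunctor.comp cp.inl H = G₁ ∧ DGFunctor.comp cp.inr H = G₂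

end Coprod

section HomotopyColimit

open Limits

/-- Objectwise weak equivalences on the category of spans (`J`-diagrams). -/
def objWE {M : Type*} [Category M] (W : MorphismProperty M) :
    MorphismProperty (WalkingSpan ⥤ M) :=
  fun _ _ η => ∀ j, W (η.app j)

/-- `(H, τ)` is a total left derived functor of `F` with respect to the weak
equivalences `WM` (on the source) and `WN` (on the target): `H` is the right Kan
extension of `Q_N ∘ F` along `Q_M`. -/
def IsTotalLeftDerived {M : Type*} [Category M] {N : Type*} [Category N]
    (F : M ⥤ N) (WM : MorphismProperty M) (WN : MorphismProperty N)
    (H : WM.Localization ⥤ WN.Localization) (τ : WM.Q ⋙ H ⟶ F ⋙ WN.Q) : Prop :=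
  ∀ (G : WM.Localization ⥤ WN.Localization) (σ : WM.Q ⋙ G ⟶ F ⋙ WN.Q),
    ∃! μ : G ⟶ H, σ = CategoryTheory.Functor.whiskerLeft WM.Q μ ≫ τ

/-- The morphism of span diagrams with components `F_C, F_A, F_B`. -/
def spanTrans {𝒞 : Type*} [Category 𝒞] {A B C A' B' C' : 𝒞}
    {α : C ⟶ A} {β : C ⟶ B} {α' : C' ⟶ A'} {β' : C' ⟶ B'}
    (FA : A ⟶ A') (FB : B ⟶ B') (FC : C ⟶ C')
    (hα : α ≫ FA = FC ≫ α') (hβ : β ≫ FB = FC ≫ β') :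
    span α β ⟶ span α' β' where
  app x := match x with
    | .none => FC
    | .some .left => FA
    | .some .right => FB
  naturality := by
    rintro _ _ (_ | _)
    · simp
    · rename_i j; cases j
      · simpa using hα
      · simpa using hβ

end HomotopyColimit

/-!
Write `comp f g` for the composite "first `f`, then `g`". An `H⁰`-isomorphism `r` comes with
an inverse `r'` and homotopies `r̂, ř`, but these need not be compatible. The failure
`u = r̂ r - r ř` is a cycle of degree `-1`; replacing `ř` by `ř + r' u` keeps
`dř = 1 - r' r` and makes `r̄ = r̂ u` a witness of `dr̄ = r̂ r - r ř`.
-/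

theorem msign_zero {M : Type*} [AddCommGroup M] (x : M) : msign 0 x = x := by
  simp [msign]

namespace DGCat

variable {A : DGCat k} {P Q R : A.Obj}

def compLeftHom (f : A.Hom P Q) : A.Hom Q R →+ A.Hom P R :=
  AddMonoidHom.mk' (A.comp f) (A.comp_add_left f)

def compRightHom (g : A.Hom Q R) : A.Hom P Q →+ A.Hom P R :=
  AddMonoidHom.mk' (fun f => A.comp f g) (fun f f' => A.comp_add_right f f' g)

theorem comp_zero (f : A.Hom P Q) : A.comp f (0 : A.Hom Q R) = 0 :=
  (compLeftHom f).map_zero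

theorem zero_comp (g : A.Hom Q R) : A.comp (0 : A.Hom P Q) g = 0 :=
  (compRightHom g).map_zero

theorem comp_sub (f : A.Hom P Q) (g g' : A.Hom Q R) :
    A.comp f (g - g') = A.comp f g - A.comp f g' :=
  (compLeftHom f).map_sub g g'

theorem sub_comp (f f' : A.Hom P Q) (g : A.Hom Q R) :
    A.comp (f - f') g = A.comp f g - A.comp f' g :=
  (compRightHom g).map_sub f f'

theorem d_sub (f g : A.Hom P Q) : A.d (f - g) = A.d f - A.d g :=
  (AddMonoidHom.mk' A.d A.d_add).map_sub f g

theorem isDeg_sub (n : ℤ) {f g : A.Hom P Q} (hf : A.IsDeg n f) (hg : A.IsDeg n g) :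
    A.IsDeg n (f - g) := by
  rw [sub_eq_add_neg, ← neg_one_smul k g]
  exact A.isDeg_add n _ _ hf (A.isDeg_smul n _ g hg)

theorem d_comp_of_d_eq_zero_right {m : ℤ} {f : A.Hom P Q} {g : A.Hom Q R}
    (hf : A.IsDeg m f) (hg : A.d g = 0) : A.d (A.comp f g) = A.comp (A.d f) g := by
  rw [A.leibniz m f g hf, hg, comp_zero, msign, smul_zero, add_zero]

theorem d_comp_of_d_eq_zero_left {f : A.Hom P Q} {g : A.Hom Q R}
    (hf : A.IsDeg 0 f) (hdf : A.d f = 0) : A.d (A.comp f g) = A.comp f (A.d g) := by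
  rw [A.leibniz 0 f g hf, hdf, zero_comp, zero_add, msign_zero]

theorem isDeg_comp_of_isDeg_zero_left {n : ℤ} {f : A.Hom P Q} {g : A.Hom Q R}
    (hf : A.IsDeg 0 f) (hg : A.IsDeg n g) : A.IsDeg n (A.comp f g) := by
  simpa using A.comp_isDeg 0 n f g hf hg

theorem isDeg_comp_of_isDeg_zero_right {n : ℤ} {f : A.Hom P Q} {g : A.Hom Q R}
    (hf : A.IsDeg n f) (hg : A.IsDeg 0 g) : A.IsDeg n (A.comp f g) := by
  simpa using A.comp_isDeg n 0 f g hf hg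

theorem d_comp_sub_comp_eq_zero {r : A.Hom P Q} {r' : A.Hom Q P} {rhat : A.Hom P P}
    {rcheck : A.Hom Q Q} (hr : A.IsDeg 0 r) (hdr : A.d r = 0) (hrhat : A.IsDeg (-1) rhat)
    (hdrhat : A.d rhat = A.one P - A.comp r r')
    (hdrcheck : A.d rcheck = A.one Q - A.comp r' r) :
    A.d (A.comp rhat r - A.comp r rcheck) = 0 := by
  rw [d_sub, d_comp_of_d_eq_zero_right hrhat hdr, d_comp_of_d_eq_zero_left hr hdr, hdrhat,
    hdrcheck, sub_comp, comp_sub, A.one_comp, A.comp_one, A.comp_assoc, sub_sub_sub_cancel_left,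
    sub_self]

end DGCat

theorem statement_12 {k : Type u} [CommRing k] (A : DGCat k) (X Y : A.Obj)
    (h : A.H0Iso X Y) :
    ∃ (r : A.Hom X Y) (r' : A.Hom Y X) (rhat : A.Hom X X) (rcheck : A.Hom Y Y)
      (rbar : A.Hom X Y),
      A.IsDeg 0 r ∧ A.IsDeg 0 r' ∧ A.IsDeg (-1) rhat ∧ A.IsDeg (-1) rcheck ∧
      A.IsDeg (-2) rbar ∧
      A.d r = 0 ∧ A.d r' = 0 ∧
      A.d rhat = A.one X - A.comp r r' ∧
      A.d rcheck = A.one Y - A.comp r' r ∧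
      A.d rbar = A.comp rhat r - A.comp r rcheck := by
  obtain ⟨r, hr, hdr, r', rhat, rcheck, hr', hdr', hrhat, hdrhat, hrcheck, hdrcheck⟩ := h
  set u := A.comp rhat r - A.comp r rcheck
  have hu : A.IsDeg (-1) u := DGCat.isDeg_sub (-1)
    (DGCat.isDeg_comp_of_isDeg_zero_right hrhat hr)
    (DGCat.isDeg_comp_of_isDeg_zero_left hr hrcheck)
  have hdu : A.d u = 0 := DGCat.d_comp_sub_comp_eq_zero hr hdr hrhat hdrhat hdrcheck
  refine ⟨r, r', rhat, rcheck + A.comp r' u, A.comp rhat u, hr, hr', hrhat,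
    A.isDeg_add _ _ _ hrcheck (DGCat.isDeg_comp_of_isDeg_zero_left hr' hu),
    by simpa using A.comp_isDeg (-1) (-1) rhat u hrhat hu, hdr, hdr', hdrhat, ?_, ?_⟩
  · rw [A.d_add, DGCat.d_comp_of_d_eq_zero_left hr' hdr', hdu, DGCat.comp_zero, add_zero,
      hdrcheck]
  · rw [DGCat.d_comp_of_d_eq_zero_right hrhat hdu, hdrhat, DGCat.sub_comp, A.one_comp,
      A.comp_add_left, ← A.comp_assoc, ← sub_sub]
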